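/- Fix reals α > 0 and σ > 0. Let π : ℝ → [0,∞) be differentiable with ∫ π(x_0) dx_0 = 1, ∫ |x_0| · π(x_0) dx_0 < ∞, π′ Lebesgue-integrable, and π(x_0) → 0 as x_0 → ±∞. Define p(x) := ∫ π(x_0) · N(x; α·x_0, σ²) dx_0. Then p is differentiable and satisfies the mixed score identity (α² + σ²) · p′(x) = ∫ ( α · (x_0 · π(x_0) + π′(x_0)) − x · π(x_0) ) · N(x; α·x_0, σ²) dx_0 for every x ∈ ℝ; equivalently, the score ∇ log p(x) equals 1/(α² + σ²) times the posterior expectation of α·(x_0 + ∇ log π(x_0)) − x under the denoising posterior p(x_0 | x) ∝ π(x_0)·N(x; α·x_0, σ²). -/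

import Mathlib

/-!
Write `p(x) = ∫ π(x₀) N(x; α x₀, σ²) dx₀`. Since `∂ₓ N` is bounded, differentiation under the
integral gives `σ² p′(x) = ∫ (α x₀ - x) π(x₀) N dx₀` (denoising score identity). As `N` depends
only on `x - α x₀`, `∂ₓ₀ N = -α ∂ₓ N`, so integrating by parts in `x₀` (the boundary terms vanish
because `π → 0` at `±∞` and `N` is bounded) gives `α p′(x) = ∫ π′(x₀) N dx₀` (target score
identity). Adding `α` times the second identity to the first gives the mixed score identity.
-/

open Real MeasureTheory Filter

/-- The one-dimensional Gaussian density with mean `m` and variance `v`: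
`N(x; m, v) = (2 π v)^(-1/2) · exp(-(x - m)² / (2 v))`. -/
noncomputable def gaussDensity1 (v m x : ℝ) : ℝ :=
  (2 * Real.pi * v) ^ (-(1 : ℝ) / 2) * Real.exp (-(x - m) ^ 2 / (2 * v))

theorem abs_mul_exp_neg_sq_div_le {σ : ℝ} (hσ : 0 < σ) (t : ℝ) :
    |t| * exp (-t ^ 2 / (2 * σ ^ 2)) ≤ σ := by
  have h_quad : |t| ≤ σ * (t ^ 2 / (2 * σ ^ 2) + 1) := by
    have h_eq : σ * (t ^ 2 / (2 * σ ^ 2) + 1) = (t ^ 2 + 2 * σ ^ 2) / (2 * σ) := by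
      field_simp
    rw [h_eq, le_div_iff₀ (by positivity)]
    nlinarith [sq_nonneg (|t| - σ), sq_abs t]
  have h_exp : |t| ≤ σ * exp (t ^ 2 / (2 * σ ^ 2)) :=
    h_quad.trans (mul_le_mul_of_nonneg_left (add_one_le_exp _) hσ.le)
  calc |t| * exp (-t ^ 2 / (2 * σ ^ 2))
      ≤ σ * exp (t ^ 2 / (2 * σ ^ 2)) * exp (-t ^ 2 / (2 * σ ^ 2)) :=
        mul_le_mul_of_nonneg_right h_exp (exp_pos _).le
    _ = σ := by rw [mul_assoc, ← exp_add, neg_div, add_neg_cancel, exp_zero, mul_one]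

theorem gaussDensity1_comm (v m x : ℝ) : gaussDensity1 v m x = gaussDensity1 v x m := by
  rw [gaussDensity1, gaussDensity1, ← neg_sub x m, neg_sq]

theorem norm_gaussDensity1_le {v : ℝ} (hv : 0 ≤ v) (m x : ℝ) :
    ‖gaussDensity1 v m x‖ ≤ (2 * π * v) ^ (-(1 : ℝ) / 2) := by
  have hc : 0 ≤ (2 * π * v) ^ (-(1 : ℝ) / 2) := rpow_nonneg (by positivity) _
  have h_exp : exp (-(x - m) ^ 2 / (2 * v)) ≤ 1 :=
    exp_le_one_iff.2 <|
      div_nonpos_of_nonpos_of_nonneg (by nlinarith [sq_nonneg (x - m)]) (by linarith)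
  rw [gaussDensity1, norm_mul, Real.norm_of_nonneg hc, Real.norm_of_nonneg (exp_pos _).le]
  exact mul_le_of_le_one_right hc h_exp

theorem norm_sub_div_mul_gaussDensity1_le {σ : ℝ} (hσ : 0 < σ) (m x : ℝ) :
    ‖(m - x) / σ ^ 2 * gaussDensity1 (σ ^ 2) m x‖ ≤ (2 * π * σ ^ 2) ^ (-(1 : ℝ) / 2) / σ := by
  set c := (2 * π * σ ^ 2) ^ (-(1 : ℝ) / 2)
  have hc : 0 ≤ c := rpow_nonneg (by positivity) _
  rw [Real.norm_eq_abs, gaussDensity1, abs_mul, abs_div, abs_sub_comm m x,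
    abs_of_pos (pow_pos hσ 2), abs_mul, abs_of_nonneg hc, abs_of_pos (exp_pos _),
    div_mul_eq_mul_div, div_le_div_iff₀ (by positivity) hσ]
  calc |x - m| * (c * exp (-(x - m) ^ 2 / (2 * σ ^ 2))) * σ
      = c * (|x - m| * exp (-(x - m) ^ 2 / (2 * σ ^ 2))) * σ := by ring
    _ ≤ c * σ * σ := by gcongr; exact abs_mul_exp_neg_sq_div_le hσ (x - m)
    _ = c * σ ^ 2 := by ring

theorem hasDerivAt_gaussDensity1 (v m x : ℝ) :
    HasDerivAt (gaussDensity1 v m) ((m - x) / v * gaussDensity1 v m x) x := by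
  have h_arg : HasDerivAt (fun y => -(y - m) ^ 2 / (2 * v)) ((m - x) / v) x := by
    refine ((((hasDerivAt_id x).sub_const m).pow 2).neg.div_const (2 * v)).congr_deriv ?_
    simp only [id]
    ring
  refine (h_arg.exp.const_mul ((2 * π * v) ^ (-(1 : ℝ) / 2))).congr_deriv ?_
  rw [gaussDensity1]
  ring

theorem hasDerivAt_gaussDensity1_mean (v m x : ℝ) :
    HasDerivAt (fun m => gaussDensity1 v m x) ((x - m) / v * gaussDensity1 v m x) m := by
  simpa only [gaussDensity1_comm v _ x] using hasDerivAt_gaussDensity1 v x m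

section Mixture

variable {X : Type*} [MeasurableSpace X] {μ : Measure X} {f m : X → ℝ}

theorem measurable_gaussDensity1_comp (hm : Measurable m) (v x : ℝ) :
    Measurable fun y => gaussDensity1 v (m y) x := by
  unfold gaussDensity1
  fun_prop

theorem MeasureTheory.Integrable.mul_gaussDensity1 (hf : Integrable f μ) (hm : Measurable m)
    {v : ℝ} (hv : 0 ≤ v) (x : ℝ) : Integrable (fun y => f y * gaussDensity1 v (m y) x) μ :=
  hf.mul_bdd (measurable_gaussDensity1_comp hm v x).aestronglyMeasurable
    (ae_of_all _ fun _ => norm_gaussDensity1_le hv _ _)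

theorem MeasureTheory.Integrable.mul_sub_div_mul_gaussDensity1 (hf : Integrable f μ)
    (hm : Measurable m) {σ : ℝ} (hσ : 0 < σ) (x : ℝ) :
    Integrable (fun y => f y * ((m y - x) / σ ^ 2 * gaussDensity1 (σ ^ 2) (m y) x)) μ :=
  hf.mul_bdd (((hm.sub_const x).div_const _).mul
      (measurable_gaussDensity1_comp hm _ x)).aestronglyMeasurable
    (ae_of_all _ fun _ => norm_sub_div_mul_gaussDensity1_le hσ _ _)

theorem hasDerivAt_integral_mul_gaussDensity1 (hf : Integrable f μ) (hm : Measurable m)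
    {σ : ℝ} (hσ : 0 < σ) (x : ℝ) :
    HasDerivAt (fun x => ∫ y, f y * gaussDensity1 (σ ^ 2) (m y) x ∂μ)
      (∫ y, f y * ((m y - x) / σ ^ 2 * gaussDensity1 (σ ^ 2) (m y) x) ∂μ) x := by
  have h_bound : ∀ y x', ‖f y * ((m y - x') / σ ^ 2 * gaussDensity1 (σ ^ 2) (m y) x')‖
      ≤ ‖f y‖ * ((2 * π * σ ^ 2) ^ (-(1 : ℝ) / 2) / σ) := fun y x' => by
    rw [norm_mul]
    exact mul_le_mul_of_nonneg_left (norm_sub_div_mul_gaussDensity1_le hσ _ _) (norm_nonneg _)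
  exact (hasDerivAt_integral_of_dominated_loc_of_deriv_le univ_mem
    (Eventually.of_forall fun x' =>
      (hf.mul_gaussDensity1 hm (sq_nonneg σ) x').aestronglyMeasurable)
    (hf.mul_gaussDensity1 hm (sq_nonneg σ) x)
    (hf.mul_sub_div_mul_gaussDensity1 hm hσ x).aestronglyMeasurable
    (ae_of_all _ fun y x' _ => h_bound y x') (hf.norm.mul_const _)
    (ae_of_all _ fun y x' _ => (hasDerivAt_gaussDensity1 _ _ x').const_mul (f y))).2

end Mixture

theorem integral_deriv_mul_gaussDensity1 {f : ℝ → ℝ} (hf : Differentiable ℝ f)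
    (hf_int : Integrable f) (hf'_int : Integrable (deriv f))
    (hf_top : Tendsto f atTop (nhds 0)) (hf_bot : Tendsto f atBot (nhds 0))
    {σ : ℝ} (hσ : 0 < σ) (α x : ℝ) :
    ∫ y, deriv f y * gaussDensity1 (σ ^ 2) (α * y) x
      = α * ∫ y, f y * ((α * y - x) / σ ^ 2 * gaussDensity1 (σ ^ 2) (α * y) x) := by
  have hm : Measurable (α * ·) := measurable_const_mul α
  set g := fun y => gaussDensity1 (σ ^ 2) (α * y) x
  set g' := fun y => (x - α * y) / σ ^ 2 * gaussDensity1 (σ ^ 2) (α * y) x * α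
  have hg : ∀ y, HasDerivAt g (g' y) y := fun y =>
    (hasDerivAt_gaussDensity1_mean _ _ x).comp y (hasDerivAt_const_mul α)
  have hfg' : (fun y => f y * g' y) = fun y => -α * (f y * ((α * y - x) / σ ^ 2 * g y)) := by
    funext y
    simp only [g, g']
    ring
  have hg_bdd : ∀ l : Filter ℝ, IsBoundedUnder (· ≤ ·) l ((‖·‖) ∘ g) := fun l =>
    isBoundedUnder_of ⟨_, fun y => norm_gaussDensity1_le (sq_nonneg σ) (α * y) x⟩
  have h_ibp := integral_mul_deriv_eq_deriv_mul (fun y _ => (hf y).hasDerivAt) (fun y _ => hg y)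
    (by rw [Pi.mul_def, hfg']; exact (hf_int.mul_sub_div_mul_gaussDensity1 hm hσ x).const_mul _)
    (hf'_int.mul_gaussDensity1 hm (sq_nonneg σ) x)
    (hf_bot.zero_mul_isBoundedUnder_le (hg_bdd _)) (hf_top.zero_mul_isBoundedUnder_le (hg_bdd _))
  rw [hfg', integral_const_mul, sub_self, zero_sub] at h_ibp
  linarith

theorem mixed_score_identity_general (α σ : ℝ) (hσ : 0 < σ)
    (pdens : ℝ → ℝ) (hπ_diff : Differentiable ℝ pdens)
    (hπ_norm : ∫ x₀, pdens x₀ = 1)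
    (hπ'_int : Integrable (deriv pdens))
    (hπ_top : Tendsto pdens atTop (nhds 0))
    (hπ_bot : Tendsto pdens atBot (nhds 0)) :
    Differentiable ℝ (fun x => ∫ x₀, pdens x₀ * gaussDensity1 (σ ^ 2) (α * x₀) x) ∧
    ∀ x, (α ^ 2 + σ ^ 2) *
        deriv (fun x => ∫ x₀, pdens x₀ * gaussDensity1 (σ ^ 2) (α * x₀) x) x =
      ∫ x₀, (α * (x₀ * pdens x₀ + deriv pdens x₀) - x * pdens x₀) *
        gaussDensity1 (σ ^ 2) (α * x₀) x := by
  have hπ_int : Integrable pdens := .of_integral_ne_zero (hπ_norm ▸ one_ne_zero)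
  have hm : Measurable (α * ·) := measurable_const_mul α
  have hp := hasDerivAt_integral_mul_gaussDensity1 hπ_int hm hσ
  refine ⟨fun x => (hp x).differentiableAt, fun x => ?_⟩
  have h_split : (fun x₀ => (α * (x₀ * pdens x₀ + deriv pdens x₀) - x * pdens x₀) *
        gaussDensity1 (σ ^ 2) (α * x₀) x)
      = fun x₀ => α * (deriv pdens x₀ * gaussDensity1 (σ ^ 2) (α * x₀) x) +
        σ ^ 2 * (pdens x₀ * ((α * x₀ - x) / σ ^ 2 * gaussDensity1 (σ ^ 2) (α * x₀) x)) := by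
    funext x₀
    field_simp
    ring
  rw [(hp x).deriv, h_split,
    integral_add ((hπ'_int.mul_gaussDensity1 hm (sq_nonneg σ) x).const_mul α)
      ((hπ_int.mul_sub_div_mul_gaussDensity1 hm hσ x).const_mul _),
    integral_const_mul, integral_const_mul,
    integral_deriv_mul_gaussDensity1 hπ_diff hπ_int hπ'_int hπ_top hπ_bot hσ]
  ring

/-- **Mixed score identity (one-dimensional).**
If `π` is a differentiable probability density on `ℝ` with finite first moment, integrable
derivative, and `π(x_0) → 0` as `x_0 → ±∞`, then `p(x) = ∫ π(x_0)·N(x; α·x_0, σ²) dx_0` is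
differentiable and satisfies
`(α² + σ²)·p′(x) = ∫ (α·(x_0·π(x_0) + π′(x_0)) − x·π(x_0))·N(x; α·x_0, σ²) dx_0`. -/
theorem mixed_score_identity (α σ : ℝ) (hα : 0 < α) (hσ : 0 < σ)
    (pdens : ℝ → ℝ) (hπ_nonneg : ∀ x, 0 ≤ pdens x) (hπ_diff : Differentiable ℝ pdens)
    (hπ_norm : ∫ x₀, pdens x₀ = 1)
    (hπ_mom : Integrable (fun x₀ => |x₀| * pdens x₀))
    (hπ'_int : Integrable (deriv pdens))
    (hπ_top : Tendsto pdens atTop (nhds 0))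
    (hπ_bot : Tendsto pdens atBot (nhds 0)) :
    Differentiable ℝ (fun x => ∫ x₀, pdens x₀ * gaussDensity1 (σ ^ 2) (α * x₀) x) ∧
    ∀ x, (α ^ 2 + σ ^ 2) *
        deriv (fun x => ∫ x₀, pdens x₀ * gaussDensity1 (σ ^ 2) (α * x₀) x) x =
      ∫ x₀, (α * (x₀ * pdens x₀ + deriv pdens x₀) - x * pdens x₀) *
        gaussDensity1 (σ ^ 2) (α * x₀) x :=
  mixed_score_identity_general α σ hσ pdens hπ_diff hπ_norm hπ'_int hπ_top hπ_bot
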